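/- Let K be a field of characteristic zero. In the polynomial ring K[x,y], let I be the ideal generated by x² and y², and let J be the ideal generated by the set of Jacobian determinants { (∂g/∂x)·(∂h/∂y) − (∂g/∂y)·(∂h/∂x) : g, h ∈ I }. Then J equals the ideal generated by x³, xy and y³. -/
import Mathlib

open MvPolynomial

private lemma half_mem {K : Type*} [Field K] [CharZero K]
    {S : Ideal (MvPolynomial (Fin 2) K)} {q : MvPolynomial (Fin 2) K}
    (h : 2 * q ∈ S) : q ∈ S := by
  have := Ideal.mul_mem_left _ (C (2⁻¹ : K)) h
  rwa [show (2 : MvPolynomial (Fin 2) K) = C 2 from (map_ofNat C 2).symm, ← mul_assoc,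
    ← C_mul, inv_mul_cancel₀ two_ne_zero, C_1, one_mul] at this

/-- Example 4.3 of the paper: in `K[x,y]` (char `K = 0`), for `I = (x², y²)`, the ideal
generated by all Jacobian determinants `Jac(g,h)` with `g, h ∈ I` is `(x³, xy, y³)`. -/
theorem stmt5 {K : Type*} [Field K] [CharZero K] :
    Ideal.span {p : MvPolynomial (Fin 2) K |
        ∃ g ∈ Ideal.span ({(X 0) ^ 2, (X 1) ^ 2} : Set (MvPolynomial (Fin 2) K)),
        ∃ h ∈ Ideal.span ({(X 0) ^ 2, (X 1) ^ 2} : Set (MvPolynomial (Fin 2) K)),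
          p = pderiv 0 g * pderiv 1 h - pderiv 1 g * pderiv 0 h} =
      Ideal.span ({(X 0) ^ 3, X 0 * X 1, (X 1) ^ 3} : Set (MvPolynomial (Fin 2) K)) := by
  apply le_antisymm
  · rw [Ideal.span_le]
    rintro p ⟨g, hg, h, hh, rfl⟩
    rw [Ideal.mem_span_pair] at hg hh
    obtain ⟨a, b, rfl⟩ := hg
    obtain ⟨c, d, rfl⟩ := hh
    set a0 := pderiv (0 : Fin 2) a; set a1 := pderiv (1 : Fin 2) a
    set b0 := pderiv (0 : Fin 2) b; set b1 := pderiv (1 : Fin 2) b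
    set c0 := pderiv (0 : Fin 2) c; set c1 := pderiv (1 : Fin 2) c
    set d0 := pderiv (0 : Fin 2) d; set d1 := pderiv (1 : Fin 2) d
    have key : pderiv 0 (a * X 0 ^ 2 + b * X 1 ^ 2) * pderiv 1 (c * X 0 ^ 2 + d * X 1 ^ 2)
        - pderiv 1 (a * X 0 ^ 2 + b * X 1 ^ 2) * pderiv 0 (c * X 0 ^ 2 + d * X 1 ^ 2)
        = X 0 ^ 3 * ((a0*c1 - a1*c0)*X 0 + 2*(a*c1 - a1*c))
          + X 0 * X 1 * ((a0*d1 + b0*c1 - a1*d0 - b1*c0)*(X 0*X 1)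
              + 2*(a0*d - b*c0)*X 0 + 2*(a*d1 - b1*c)*X 1 + 4*(a*d - b*c))
          + X 1 ^ 3 * ((b0*d1 - b1*d0)*X 1 + 2*(b0*d - b*d0)) := by
      simp only [map_add, pderiv_mul, pderiv_X_self, pderiv_X, pow_two]
      simp [a0, a1, b0, b1, c0, c1, d0, d1]
      ring
    rw [key]
    refine add_mem (add_mem ?_ ?_) ?_ <;>
      exact Ideal.mul_mem_right _ _ (Ideal.subset_span (by simp))
  · rw [Ideal.span_le]
    rintro p (rfl | rfl | rfl)
    · apply half_mem
      have : 2 * (X 0 : MvPolynomial (Fin 2) K) ^ 3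
          = pderiv 0 ((X 0 : MvPolynomial (Fin 2) K)^2) * pderiv 1 (X 1 * X 0 ^ 2)
            - pderiv 1 ((X 0 : MvPolynomial (Fin 2) K)^2) * pderiv 0 (X 1 * X 0 ^ 2) := by
        simp [pderiv_mul, pow_two]; ring
      rw [this]
      exact Ideal.subset_span ⟨X 0 ^ 2, Ideal.subset_span (by simp), X 1 * X 0 ^ 2,
        Ideal.mul_mem_left _ _ (Ideal.subset_span (by simp)), rfl⟩
    · apply half_mem; apply half_mem
      have : 2 * (2 * ((X 0 : MvPolynomial (Fin 2) K) * X 1))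
          = pderiv 0 ((X 0 : MvPolynomial (Fin 2) K)^2) * pderiv 1 (X 1 ^ 2)
            - pderiv 1 ((X 0 : MvPolynomial (Fin 2) K)^2) * pderiv 0 (X 1 ^ 2) := by
        simp [pderiv_mul, pow_two]; ring
      rw [this]
      exact Ideal.subset_span ⟨X 0 ^ 2, Ideal.subset_span (by simp), X 1 ^ 2,
        Ideal.subset_span (by simp), rfl⟩
    · apply half_mem
      have : 2 * (X 1 : MvPolynomial (Fin 2) K) ^ 3
          = pderiv 0 ((X 0 : MvPolynomial (Fin 2) K) * X 1 ^ 2) * pderiv 1 (X 1 ^ 2)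
            - pderiv 1 ((X 0 : MvPolynomial (Fin 2) K) * X 1 ^ 2) * pderiv 0 (X 1 ^ 2) := by
        simp [pderiv_mul, pow_two]; ring
      rw [this]
      exact Ideal.subset_span ⟨X 0 * X 1 ^ 2, Ideal.mul_mem_left _ _ (Ideal.subset_span (by simp)),
        X 1 ^ 2, Ideal.subset_span (by simp), rfl⟩
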